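/- For a vertex v of a graph G, there exists an efficient zero forcing set B containing v and an efficient set of forces of B in which v performs no force if and only if pt(G−v) = pt(G) and Z(G−v) = Z(G) − 1. -/

import Mathlib

open SimpleGraph

variable {V : Type*}

/-- One simultaneous round of the color change rule: all currently forceable
vertices become black. -/
def forceStep (G : SimpleGraph V) (S : Set V) : Set V :=
  S ∪ {w | ∃ v ∈ S, G.Adj v w ∧ ∀ u, G.Adj v u → u ∉ S → u = w}

/-- The (cumulative) set of black vertices after `t` simultaneous rounds,
starting from `B`; so `B^{(t)} = propSet G B t \ propSet G B (t-1)`. -/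
def propSet (G : SimpleGraph V) (B : Set V) : ℕ → Set V
  | 0 => B
  | t + 1 => forceStep G (propSet G B t)

/-- `B` is a zero forcing set of `G`. -/
def IsZFSet (G : SimpleGraph V) (B : Set V) : Prop := ∃ t, propSet G B t = Set.univ

/-- The zero forcing number `Z(G)`. -/
noncomputable def zfNum (G : SimpleGraph V) : ℕ :=
  sInf {n | ∃ B : Set V, IsZFSet G B ∧ B.ncard = n}

/-- `B` is a minimum zero forcing set of `G`. -/
def IsMinZFSet (G : SimpleGraph V) (B : Set V) : Prop := IsZFSet G B ∧ B.ncard = zfNum G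

/-- The propagation time `pt(G,B)` of a zero forcing set `B`. -/
noncomputable def ptSet (G : SimpleGraph V) (B : Set V) : ℕ :=
  sInf {t | propSet G B t = Set.univ}

/-- The minimum propagation time `pt(G)`. -/
noncomputable def ptMin (G : SimpleGraph V) : ℕ :=
  sInf (ptSet G '' {B | IsMinZFSet G B})

/-- The maximum propagation time `PT(G)`. -/
noncomputable def ptMax (G : SimpleGraph V) : ℕ :=
  sSup (ptSet G '' {B | IsMinZFSet G B})

/-- `IsChronList G S L` : starting from black set `S`, the list `L` is a valid
chronological list of forces, performed one at a time, ending with all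
vertices black. -/
def IsChronList (G : SimpleGraph V) : Set V → List (V × V) → Prop
  | S, [] => S = Set.univ
  | S, (v, w) :: L =>
      v ∈ S ∧ w ∉ S ∧ G.Adj v w ∧ (∀ u, G.Adj v u → u ∉ S → u = w) ∧
        IsChronList G (insert w S) L

/-- `F` is a set of forces of `B`: the unordered set of forces of some
chronological list of forces of `B`. -/
def IsForceSet (G : SimpleGraph V) (B : Set V) (F : Set (V × V)) : Prop :=
  ∃ L : List (V × V), IsChronList G B L ∧ {p | p ∈ L} = F

/-- The terminus of a set of forces: the vertices performing no force. -/
def termSet (F : Set (V × V)) : Set V := {v | ∀ w, (v, w) ∉ F}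

/-- The reverse set of forces. -/
def revSet (F : Set (V × V)) : Set (V × V) := (fun p : V × V => (p.2, p.1)) '' F

/-- The (cumulative) set of black vertices after `t` rounds when propagating
using only the forces in `F`, starting from `B`;
so `F^{(t)} = fpropSet G B F t \ fpropSet G B F (t-1)`. -/
def fpropSet (G : SimpleGraph V) (B : Set V) (F : Set (V × V)) : ℕ → Set V
  | 0 => B
  | t + 1 => fpropSet G B F t ∪
      {w | ∃ v, (v, w) ∈ F ∧ v ∈ fpropSet G B F t ∧ w ∉ fpropSet G B F t ∧
        ∀ u, G.Adj v u → u ∉ fpropSet G B F t → u = w}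

/-- The propagation time `pt(G,F)` of a set of forces `F` of `B`. -/
noncomputable def ptForces (G : SimpleGraph V) (B : Set V) (F : Set (V × V)) : ℕ :=
  sInf {t | fpropSet G B F t = Set.univ}

/-- `B` is an efficient zero forcing set of `G`. -/
def IsEffZFSet (G : SimpleGraph V) (B : Set V) : Prop :=
  IsMinZFSet G B ∧ ptSet G B = ptMin G

/-- `F` is an efficient set of forces of the minimum zero forcing set `B`. -/
def IsEffForces (G : SimpleGraph V) (B : Set V) (F : Set (V × V)) : Prop :=
  IsMinZFSet G B ∧ IsForceSet G B F ∧ ptForces G B F = ptMin G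

/-!
A vertex `v` of `B` that never forces is black from the start and never obstructs a force of its
neighbours, so the forces of `F` are forces of `G - v` started from `B \ {v}`, with the same
propagation time; hence `Z(G - v) ≤ Z(G) - 1` and `pt(G - v) ≤ pt(G)`. Conversely, adding `v` to
a zero forcing set of `G - v` gives one of `G` that is no slower, so `Z(G) ≤ Z(G - v) + 1` and, when
equality holds, `pt(G) ≤ pt(G - v)`. For the converse implication one also needs a set of forces
realising the propagation time of a zero forcing set: list the vertices in the order of the round
in which they turn black, each forced by a vertex that can force it in that round.
-/

def CanForce (G : SimpleGraph V) (S : Set V) (x w : V) : Prop :=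
  x ∈ S ∧ w ∉ S ∧ G.Adj x w ∧ ∀ u, G.Adj x u → u ∉ S → u = w

section Propagation

variable {G : SimpleGraph V} {B : Set V} {F : Set (V × V)}

lemma propSet_monotone : Monotone (propSet G B) :=
  monotone_nat_of_le_succ fun _ => Set.subset_union_left

lemma fpropSet_monotone : Monotone (fpropSet G B F) :=
  monotone_nat_of_le_succ fun _ => Set.subset_union_left

lemma subset_fpropSet (t : ℕ) : B ⊆ fpropSet G B F t :=
  fpropSet_monotone (Nat.zero_le t)

lemma propSet_empty (t : ℕ) : propSet G ∅ t = ∅ := by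
  induction t with
  | zero => rfl
  | succ t ih => simp [propSet, forceStep, ih]

lemma fpropSet_subset_propSet (hF : ∀ p ∈ F, G.Adj p.1 p.2) (t : ℕ) :
    fpropSet G B F t ⊆ propSet G B t := by
  induction t with
  | zero => exact subset_rfl
  | succ t ih =>
    rintro w (hw | ⟨x, hxw, hx, -, huniq⟩)
    · exact Set.subset_union_left (ih hw)
    · exact Or.inr ⟨x, ih hx, hF _ hxw, fun u hu hut => huniq u hu fun h => hut (ih h)⟩

lemma propSet_eq_univ_of_fpropSet (hF : ∀ p ∈ F, G.Adj p.1 p.2) {t : ℕ}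
    (h : fpropSet G B F t = Set.univ) : propSet G B t = Set.univ :=
  Set.eq_univ_of_univ_subset (h ▸ fpropSet_subset_propSet hF t)

lemma ptSet_le {t : ℕ} (h : propSet G B t = Set.univ) : ptSet G B ≤ t := Nat.sInf_le h

lemma propSet_ptSet (h : IsZFSet G B) : propSet G B (ptSet G B) = Set.univ := Nat.sInf_mem h

end Propagation

section Minimum

variable {G : SimpleGraph V} {B : Set V}

lemma zfNum_le (h : IsZFSet G B) : zfNum G ≤ B.ncard := Nat.sInf_le ⟨B, h, rfl⟩

lemma ptMin_le (h : IsMinZFSet G B) : ptMin G ≤ ptSet G B := Nat.sInf_le ⟨B, h, rfl⟩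

variable (G)

lemma exists_isMinZFSet : ∃ B, IsMinZFSet G B :=
  Nat.sInf_mem
    (⟨_, Set.univ, ⟨0, rfl⟩, rfl⟩ : {n | ∃ B : Set V, IsZFSet G B ∧ B.ncard = n}.Nonempty)

lemma exists_isEffZFSet : ∃ B, IsEffZFSet G B := by
  obtain ⟨B, hB⟩ := exists_isMinZFSet G
  exact Nat.sInf_mem (⟨_, B, hB, rfl⟩ : (ptSet G '' {B | IsMinZFSet G B}).Nonempty)

lemma zfNum_pos [Finite V] [Nonempty V] : 0 < zfNum G := by
  obtain ⟨B, ⟨t, ht⟩, hcard⟩ := exists_isMinZFSet G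
  rw [← hcard, Set.ncard_pos]
  refine Set.nonempty_iff_ne_empty.2 fun hB => ?_
  rw [hB, propSet_empty] at ht
  exact Set.empty_ne_univ ht

end Minimum

section Chronological

variable {G : SimpleGraph V} {B : Set V} {F : Set (V × V)}

lemma IsChronList.adj : ∀ {S : Set V} {L : List (V × V)}, IsChronList G S L →
    ∀ p ∈ L, G.Adj p.1 p.2
  | _, [], _, _, hp => absurd hp List.not_mem_nil
  | _, (_, _) :: _, ⟨_, _, hxw, _, hL⟩, _, hp => by
    rcases List.mem_cons.1 hp with rfl | hp
    exacts [hxw, hL.adj _ hp]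

/-- Each force of the list can be performed no later than the round after its predecessor. -/
lemma IsChronList.fpropSet_eq_univ : ∀ {S : Set V} {L : List (V × V)} {t : ℕ},
    IsChronList G S L → (∀ p ∈ L, p ∈ F) → S ⊆ fpropSet G B F t →
      fpropSet G B F (t + L.length) = Set.univ
  | _, [], _, hL, _, hS => Set.eq_univ_of_univ_subset (hL ▸ hS)
  | S, (x, w) :: _, t, ⟨hx, _, _, huniq, hL⟩, hF, hS => by
    have hstep : insert w S ⊆ fpropSet G B F (t + 1) := by
      refine Set.insert_subset ?_ (hS.trans (fpropSet_monotone t.le_succ))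
      by_cases hwt : w ∈ fpropSet G B F t
      · exact Set.subset_union_left hwt
      · exact Or.inr ⟨x, hF _ List.mem_cons_self, hS hx, hwt,
          fun u hu hut => huniq u hu fun h => hut (hS h)⟩
    rw [List.length_cons, ← add_assoc, add_right_comm]
    exact hL.fpropSet_eq_univ (fun p hp => hF p (List.mem_cons_of_mem _ hp)) hstep

lemma IsForceSet.adj (h : IsForceSet G B F) : ∀ p ∈ F, G.Adj p.1 p.2 := by
  obtain ⟨L, hL, rfl⟩ := h
  exact hL.adj

lemma IsForceSet.fpropSet_ptForces (h : IsForceSet G B F) :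
    fpropSet G B F (ptForces G B F) = Set.univ := by
  obtain ⟨L, hL, rfl⟩ := h
  have h := hL.fpropSet_eq_univ (B := B) (t := 0) (fun _ hp => hp) subset_rfl
  rw [zero_add] at h
  exact Nat.sInf_mem (s := {t | fpropSet G B _ t = Set.univ}) ⟨_, h⟩

end Chronological

section Realisation

variable {G : SimpleGraph V} {B : Set V}

lemma exists_forcer_of_isZFSet (hB : IsZFSet G B) :
    ∃ (τ : V → ℕ) (f : V → V), ∀ w ∉ B, CanForce G (propSet G B (τ w)) (f w) w := by
  obtain ⟨T, hT⟩ := hB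
  have h : ∀ w, ∃ t x, w ∉ B → CanForce G (propSet G B t) x w := by
    intro w
    by_cases hw : w ∈ B
    · exact ⟨0, w, fun h => absurd hw h⟩
    obtain ⟨t, hwt, hwt'⟩ := Nat.exists_not_and_succ_of_not_zero_of_exists
      (p := fun t => w ∈ propSet G B t) hw ⟨T, hT ▸ Set.mem_univ w⟩
    rcases hwt' with hwt' | ⟨x, hx, hxw, huniq⟩
    · exact absurd hwt' hwt
    · exact ⟨t, x, fun _ => ⟨hx, hwt, hxw, huniq⟩⟩
  choose τ f hf using h
  exact ⟨τ, f, fun w hw => hf w hw⟩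

variable {τ : V → ℕ} {f : V → V}

lemma propSet_subset_fpropSet_of_forcer (hf : ∀ w ∉ B, CanForce G (propSet G B (τ w)) (f w) w)
    (t : ℕ) : propSet G B t ⊆ fpropSet G B ((fun w => (f w, w)) '' Bᶜ) t := by
  induction t with
  | zero => exact subset_rfl
  | succ t ih =>
    rintro w (hw | hw)
    · exact Or.inl (ih hw)
    by_cases hwt : w ∈ fpropSet G B ((fun w => (f w, w)) '' Bᶜ) t
    · exact Or.inl hwt
    have hwB : w ∉ B := fun h => hwt (subset_fpropSet t h)
    obtain ⟨hfw, hwτ, -, huniq⟩ := hf w hwB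
    have hτ : τ w ≤ t := by
      by_contra h
      exact hwτ (propSet_monotone (by omega : t + 1 ≤ τ w) (Or.inr hw))
    exact Or.inr ⟨f w, ⟨w, hwB, rfl⟩, ih (propSet_monotone hτ hfw), hwt,
      fun u hu hut => huniq u hu fun h => hut (ih (propSet_monotone hτ h))⟩

/-- When the turn of `w` comes, every vertex black by round `τ w` is already black, so `f w` can
still force `w`. -/
lemma isChronList_of_pairwise (hf : ∀ w ∉ B, CanForce G (propSet G B (τ w)) (f w) w) :
    ∀ l : List V, l.Nodup → l.Pairwise (fun a b => τ a ≤ τ b) → (∀ w ∈ l, w ∉ B) →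
      IsChronList G {u | u ∉ l} (l.map fun w => (f w, w))
  | [], _, _, _ => Set.eq_univ_of_forall fun _ => List.not_mem_nil
  | w :: l, hnd, hsort, hB => by
    rw [List.nodup_cons] at hnd
    rw [List.pairwise_cons] at hsort
    obtain ⟨hx, -, hxw, huniq⟩ := hf w (hB w List.mem_cons_self)
    have hsub : propSet G B (τ w) ⊆ {u | u ∉ w :: l} := by
      intro u hu hul
      have hlt : τ u < τ w :=
        lt_of_not_ge fun h => (hf u (hB u hul)).2.1 (propSet_monotone h hu)
      rcases List.mem_cons.1 hul with rfl | hul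
      · exact lt_irrefl _ hlt
      · exact (hsort.1 u hul).not_gt hlt
    have hins : insert w {u | u ∉ w :: l} = {u | u ∉ l} := by
      ext u
      by_cases hu : u = w
      · simp [hu, hnd.1]
      · simp [hu]
    refine ⟨hsub hx, fun h => h List.mem_cons_self, hxw,
      fun u hu hul => huniq u hu fun h => hul (hsub h), ?_⟩
    rw [hins]
    exact isChronList_of_pairwise hf l hnd.2 hsort.2 fun u hu => hB u (List.mem_cons_of_mem _ hu)

lemma Set.Finite.exists_nodup_pairwise_le {α β : Type*} [LinearOrder β] {s : Set α}
    (hs : s.Finite) (τ : α → β) :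
    ∃ l : List α, l.Nodup ∧ l.Pairwise (fun a b => τ a ≤ τ b) ∧ ∀ a, a ∈ l ↔ a ∈ s := by
  refine ⟨hs.toFinset.toList.mergeSort fun a b => decide (τ a ≤ τ b),
    (List.mergeSort_perm _ _).nodup_iff.2 (Finset.nodup_toList _), ?_, fun a => by simp⟩
  simpa using List.pairwise_mergeSort (le := fun a b => decide (τ a ≤ τ b))
    (fun a b c hab hbc => by simp only [decide_eq_true_eq] at *; exact hab.trans hbc)
    (fun a b => by simpa only [Bool.or_eq_true, decide_eq_true_eq] using le_total _ _)
    hs.toFinset.toList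

theorem exists_isForceSet_ptForces_eq [Finite V] (hB : IsZFSet G B) :
    ∃ F, IsForceSet G B F ∧ ptForces G B F = ptSet G B := by
  obtain ⟨τ, f, hf⟩ := exists_forcer_of_isZFSet hB
  obtain ⟨l, hnd, hsort, hl⟩ := Bᶜ.toFinite.exists_nodup_pairwise_le τ
  have hF : IsForceSet G B ((fun w => (f w, w)) '' Bᶜ) := by
    refine ⟨l.map fun w => (f w, w), ?_, by ext p; simp [hl]⟩
    convert isChronList_of_pairwise hf l hnd hsort fun w hw => (hl w).1 hw
    ext u
    simp [hl]
  have hprop : fpropSet G B ((fun w => (f w, w)) '' Bᶜ) = propSet G B :=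
    funext fun t => (fpropSet_subset_propSet hF.adj t).antisymm
      (propSet_subset_fpropSet_of_forcer hf t)
  exact ⟨_, hF, by rw [ptForces, hprop, ptSet]⟩

end Realisation

section DeleteVertex

variable {G : SimpleGraph V} {v : V} {B : Set V}

lemma preimage_val_eq_univ_iff {s : Set V} (hv : v ∈ s) :
    (Subtype.val : {u : V | u ≠ v} → V) ⁻¹' s = Set.univ ↔ s = Set.univ := by
  refine ⟨fun h => Set.eq_univ_of_forall fun u => ?_, fun h => by rw [h, Set.preimage_univ]⟩
  by_cases hu : u = v
  · exact hu ▸ hv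
  · exact Set.eq_univ_iff_forall.1 h ⟨u, hu⟩

lemma preimage_val_insert_image (S : Set {u : V | u ≠ v}) :
    Subtype.val ⁻¹' insert v (Subtype.val '' S) = S := by
  ext u
  have hu : (u : V) ≠ v := u.2
  simp [hu]

lemma ncard_insert_image_val [Finite V] (S : Set {u : V | u ≠ v}) :
    (insert v (Subtype.val '' S)).ncard = S.ncard + 1 := by
  rw [Set.ncard_insert_of_notMem (fun ⟨u, _, hu⟩ => u.2 hu : v ∉ Subtype.val '' S),
    Set.ncard_image_of_injective _ Subtype.val_injective]

lemma ncard_preimage_val_add_one [Finite V] (hv : v ∈ B) :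
    (Subtype.val ⁻¹' B : Set {u : V | u ≠ v}).ncard + 1 = B.ncard := by
  rw [← ncard_insert_image_val, Subtype.image_preimage_coe]
  congr 1
  ext u
  by_cases hu : u = v <;> simp [hu, hv]

/-- Forces of `G - v` remain valid in `G` once `v` is black. -/
lemma propSet_induce_subset (S : Set {u : V | u ≠ v}) (t : ℕ) :
    propSet (G.induce {u | u ≠ v}) S t ⊆
      Subtype.val ⁻¹' propSet G (insert v (Subtype.val '' S)) t := by
  induction t with
  | zero => exact fun u hu => Set.mem_insert_of_mem _ ⟨u, hu, rfl⟩
  | succ t ih =>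
    have hv : v ∈ propSet G (insert v (Subtype.val '' S)) t :=
      propSet_monotone (Nat.zero_le t) (Set.mem_insert v _)
    rintro w (hw | ⟨x, hx, hxw, huniq⟩)
    · exact Set.subset_union_left (ih hw)
    · refine Or.inr ⟨x, ih hx, hxw, fun u hu hut => ?_⟩
      have huv : u ≠ v := fun h => hut (h ▸ hv)
      exact congrArg Subtype.val (huniq ⟨u, huv⟩ hu fun h => hut (ih h))

lemma propSet_insert_eq_univ {S : Set {u : V | u ≠ v}} {t : ℕ}
    (h : propSet (G.induce {u | u ≠ v}) S t = Set.univ) :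
    propSet G (insert v (Subtype.val '' S)) t = Set.univ := by
  rw [← preimage_val_eq_univ_iff (propSet_monotone (Nat.zero_le t) (Set.mem_insert v _))]
  exact Set.eq_univ_of_univ_subset (h ▸ propSet_induce_subset S t)

lemma IsZFSet.insert_val {S : Set {u : V | u ≠ v}} (h : IsZFSet (G.induce {u | u ≠ v}) S) :
    IsZFSet G (insert v (Subtype.val '' S)) :=
  ⟨_, propSet_insert_eq_univ (propSet_ptSet h)⟩

lemma ptSet_insert_le {S : Set {u : V | u ≠ v}} (h : IsZFSet (G.induce {u | u ≠ v}) S) :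
    ptSet G (insert v (Subtype.val '' S)) ≤ ptSet (G.induce {u | u ≠ v}) S :=
  ptSet_le (propSet_insert_eq_univ (propSet_ptSet h))

lemma IsMinZFSet.insert_val [Finite V] (hZ : zfNum G = zfNum (G.induce {u | u ≠ v}) + 1)
    {S : Set {u : V | u ≠ v}} (h : IsMinZFSet (G.induce {u | u ≠ v}) S) :
    IsMinZFSet G (insert v (Subtype.val '' S)) :=
  ⟨h.1.insert_val, by rw [ncard_insert_image_val, h.2, hZ]⟩

lemma zfNum_le_zfNum_induce_add_one [Finite V] :
    zfNum G ≤ zfNum (G.induce {u | u ≠ v}) + 1 := by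
  obtain ⟨S, hS, hcard⟩ := exists_isMinZFSet (G.induce {u | u ≠ v})
  calc zfNum G ≤ (insert v (Subtype.val '' S)).ncard := zfNum_le hS.insert_val
    _ = zfNum (G.induce {u | u ≠ v}) + 1 := by rw [ncard_insert_image_val, hcard]

lemma ptMin_le_ptMin_induce [Finite V] (hZ : zfNum G = zfNum (G.induce {u | u ≠ v}) + 1) :
    ptMin G ≤ ptMin (G.induce {u | u ≠ v}) := by
  obtain ⟨S, hS, hpt⟩ := exists_isEffZFSet (G.induce {u | u ≠ v})
  calc ptMin G ≤ ptSet G (insert v (Subtype.val '' S)) := ptMin_le (hS.insert_val hZ)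
    _ ≤ ptSet (G.induce {u | u ≠ v}) S := ptSet_insert_le hS.1
    _ = ptMin (G.induce {u | u ≠ v}) := hpt

variable {F : Set (V × V)}

/-- `v` is black throughout, so it never blocks a force. -/
lemma fpropSet_induce (hv : v ∈ B) (hF : ∀ w, (v, w) ∉ F) (t : ℕ) :
    fpropSet (G.induce {u | u ≠ v}) (Subtype.val ⁻¹' B) (Prod.map Subtype.val Subtype.val ⁻¹' F) t =
      Subtype.val ⁻¹' fpropSet G B F t := by
  induction t with
  | zero => rfl
  | succ t ih =>
    have hvt : v ∈ fpropSet G B F t := subset_fpropSet t hv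
    ext u
    refine or_congr (by rw [ih]; rfl) ⟨?_, ?_⟩
    · rintro ⟨x, hxu, hx, hu, huniq⟩
      rw [ih] at hx hu
      refine ⟨x, hxu, hx, hu, fun z hz hzt => ?_⟩
      exact congrArg Subtype.val
        (huniq ⟨z, fun h => hzt (h ▸ hvt)⟩ hz (by rw [ih]; exact hzt))
    · rintro ⟨x, hxu, hx, hu, huniq⟩
      have hxv : x ≠ v := by
        rintro rfl
        exact hF _ hxu
      refine ⟨⟨x, hxv⟩, hxu, by rw [ih]; exact hx, by rw [ih]; exact hu, fun z hz hzt => ?_⟩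
      rw [ih] at hzt
      exact Subtype.val_injective (huniq z hz hzt)

lemma ptForces_induce (hv : v ∈ B) (hF : ∀ w, (v, w) ∉ F) :
    ptForces (G.induce {u | u ≠ v}) (Subtype.val ⁻¹' B) (Prod.map Subtype.val Subtype.val ⁻¹' F) =
      ptForces G B F := by
  unfold ptForces
  congr 1
  ext t
  change _ = _ ↔ _ = _
  rw [fpropSet_induce hv hF,
    preimage_val_eq_univ_iff (subset_fpropSet t hv)]

lemma IsForceSet.propSet_induce_ptForces (hF : IsForceSet G B F) (hv : v ∈ B)
    (hvF : ∀ w, (v, w) ∉ F) :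
    propSet (G.induce {u | u ≠ v}) (Subtype.val ⁻¹' B) (ptForces G B F) = Set.univ :=
  propSet_eq_univ_of_fpropSet (F := Prod.map Subtype.val Subtype.val ⁻¹' F)
    (fun p hp => hF.adj _ hp)
    (by rw [fpropSet_induce hv hvF, hF.fpropSet_ptForces, Set.preimage_univ])

lemma IsChronList.insert_val : ∀ {S : Set {u : V | u ≠ v}} {L},
    IsChronList (G.induce {u | u ≠ v}) S L →
      IsChronList G (insert v (Subtype.val '' S)) (L.map (Prod.map Subtype.val Subtype.val))
  | S, [], hL => by
    show insert v (Subtype.val '' S) = Set.univ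
    rw [← preimage_val_eq_univ_iff (Set.mem_insert v _), preimage_val_insert_image]
    exact hL
  | S, (x, w) :: _, ⟨hx, hw, hxw, huniq, hL⟩ => by
    refine ⟨Set.mem_insert_of_mem _ ⟨x, hx, rfl⟩, ?_, hxw, fun u hu hut => ?_, ?_⟩
    · rintro (h | ⟨w', hw', h⟩)
      · exact w.2 h
      · exact hw (Subtype.val_injective h ▸ hw')
    · have huv : u ≠ v := fun h => hut (Or.inl h)
      exact congrArg Subtype.val (huniq ⟨u, huv⟩ hu fun h => hut (Or.inr ⟨_, h, rfl⟩))
    · have h := hL.insert_val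
      rwa [Set.image_insert_eq, Set.insert_comm] at h

lemma IsForceSet.insert_val {S : Set {u : V | u ≠ v}} {F : Set ({u : V | u ≠ v} × {u : V | u ≠ v})}
    (h : IsForceSet (G.induce {u | u ≠ v}) S F) :
    IsForceSet G (insert v (Subtype.val '' S)) (Prod.map Subtype.val Subtype.val '' F) := by
  obtain ⟨L, hL, rfl⟩ := h
  refine ⟨_, hL.insert_val, ?_⟩
  ext p
  simp only [List.mem_map, Set.mem_image]
  rfl

lemma mk_notMem_image_prodMap_val (F : Set ({u : V | u ≠ v} × {u : V | u ≠ v})) (w : V) :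
    (v, w) ∉ Prod.map Subtype.val Subtype.val '' F :=
  fun ⟨p, _, hp⟩ => p.1.2 (congrArg Prod.fst hp)

lemma ptForces_insert_val (S : Set {u : V | u ≠ v})
    (F : Set ({u : V | u ≠ v} × {u : V | u ≠ v})) :
    ptForces G (insert v (Subtype.val '' S)) (Prod.map Subtype.val Subtype.val '' F) =
      ptForces (G.induce {u | u ≠ v}) S F := by
  rw [← ptForces_induce (Set.mem_insert v _) (mk_notMem_image_prodMap_val F),
    preimage_val_insert_image,
    Set.preimage_image_eq _ (Subtype.val_injective.prodMap Subtype.val_injective)]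

end DeleteVertex

/-- There exists an efficient zero forcing set `B` of `G` containing `v` and an
efficient set of forces of `B` in which `v` performs no force, if and only if
`pt(G - v) = pt(G)` and `Z(G - v) = Z(G) - 1`. -/
theorem eff_nonforcing_vertex_iff {V : Type*} [Finite V] (G : SimpleGraph V) (v : V) :
    (∃ (B : Set V) (F : Set (V × V)), IsEffZFSet G B ∧ v ∈ B ∧ IsEffForces G B F ∧
        ∀ w, (v, w) ∉ F) ↔
      (ptMin (G.induce {u | u ≠ v}) = ptMin G ∧
        zfNum (G.induce {u | u ≠ v}) = zfNum G - 1) := by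
  have hZle := zfNum_le_zfNum_induce_add_one (G := G) (v := v)
  constructor
  · rintro ⟨B, F, ⟨⟨-, hBcard⟩, -⟩, hvB, ⟨-, hF, hFpt⟩, hvF⟩
    have hT := hF.propSet_induce_ptForces hvB hvF
    have hcard := ncard_preimage_val_add_one (v := v) hvB
    have hZ' := zfNum_le ⟨_, hT⟩
    have hB'min : IsMinZFSet (G.induce {u | u ≠ v}) (Subtype.val ⁻¹' B) := ⟨⟨_, hT⟩, by omega⟩
    exact ⟨le_antisymm ((ptMin_le hB'min).trans (hFpt ▸ ptSet_le hT))
      (ptMin_le_ptMin_induce (by omega)), by omega⟩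
  · rintro ⟨hpt, hZ⟩
    have : Nonempty V := ⟨v⟩
    have hZ' : zfNum G = zfNum (G.induce {u | u ≠ v}) + 1 := by
      have := zfNum_pos G
      omega
    obtain ⟨B₀, hB₀, hB₀pt⟩ := exists_isEffZFSet (G.induce {u | u ≠ v})
    obtain ⟨F₀, hF₀, hF₀pt⟩ := exists_isForceSet_ptForces_eq hB₀.1
    have hBmin := hB₀.insert_val hZ'
    have hBpt : ptSet G _ = ptMin G :=
      ((ptSet_insert_le hB₀.1).trans (hB₀pt.trans hpt).le).antisymm (ptMin_le hBmin)
    refine ⟨_, _, ⟨hBmin, hBpt⟩, Set.mem_insert v _, ⟨hBmin, hF₀.insert_val, ?_⟩,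
      mk_notMem_image_prodMap_val F₀⟩
    rw [ptForces_insert_val, hF₀pt, hB₀pt, hpt]
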